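/- arXiv:1404.2081 — 4 statements merged into one kernel-verified Lean document; each statement's English description precedes it below -/
import Mathlib

section
/- Let N and M be positive integers, let H be an N×M complex matrix such that H Hᴴ is invertible, and let Hᴿ = α H† be its normalized right pseudo-inverse, where H† = Hᴴ (H Hᴴ)⁻¹ and α⁻² = tr((H†)ᴴ H†). Then for every positive semidefinite Hermitian N×N complex matrix Q, the real number tr(Hᴿ Q (Hᴿ)ᴴ) satisfies tr(Hᴿ Q (Hᴿ)ᴴ) ≤ tr(Q); i.e., pre-coding with the normalized right pseudo-inverse does not increase the transmit power. -/
/-!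
Write `Q = Cᴴ C`. Then `tr(Hᴿ Q Hᴿᴴ) = ‖C Hᴿᴴ‖²`, with `‖·‖` the Frobenius norm, and
submultiplicativity gives `‖C Hᴿᴴ‖² ≤ ‖C‖² ‖Hᴿ‖² = tr(Q) ‖Hᴿ‖²`; the normalization `α` is chosen
precisely so that `‖Hᴿ‖ = 1`.
-/

open Matrix
open scoped ComplexOrder

namespace Matrix

variable {𝕜 : Type*} [RCLike 𝕜] {m n : Type*} [Fintype m] [Fintype n]

open scoped Matrix.Norms.Frobenius

theorem frobenius_norm_sq_eq_re_trace (A : Matrix m n 𝕜) :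
    ‖A‖ ^ 2 = RCLike.re (Aᴴ * A).trace := by
  rw [show ‖A‖ = ‖WithLp.toLp 2 fun i => WithLp.toLp 2 fun j => A i j‖ from rfl]
  simp only [PiLp.norm_sq_eq_of_L2, trace, diag, mul_apply, conjTranspose_apply, map_sum,
    RCLike.star_def, RCLike.conj_mul]
  rw [Finset.sum_comm]
  norm_cast

theorem PosSemidef.exists_eq_conjTranspose_mul_self [DecidableEq n] {Q : Matrix n n 𝕜}
    (hQ : Q.PosSemidef) :
    ∃ C : Matrix n n 𝕜, Q = Cᴴ * C := by
  open scoped MatrixOrder in exact CStarAlgebra.nonneg_iff_eq_star_mul_self.mp hQ.nonneg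

theorem re_trace_mul_mul_conjTranspose_le [DecidableEq n] (P : Matrix m n 𝕜) {Q : Matrix n n 𝕜}
    (hQ : Q.PosSemidef) :
    RCLike.re (P * Q * Pᴴ).trace ≤ RCLike.re (Pᴴ * P).trace * RCLike.re Q.trace := by
  obtain ⟨C, rfl⟩ := hQ.exists_eq_conjTranspose_mul_self
  have hfactor : P * (Cᴴ * C) * Pᴴ = (C * Pᴴ)ᴴ * (C * Pᴴ) := by
    simp only [conjTranspose_mul, conjTranspose_conjTranspose, Matrix.mul_assoc]
  rw [hfactor, ← frobenius_norm_sq_eq_re_trace, ← frobenius_norm_sq_eq_re_trace,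
    ← frobenius_norm_sq_eq_re_trace, ← frobenius_norm_conjTranspose P, ← mul_pow, mul_comm]
  gcongr
  exact frobenius_norm_mul C Pᴴ

end Matrix

theorem normalized_right_pseudoinverse_power_general (N M : ℕ)
    (H : Matrix (Fin N) (Fin M) ℂ)
    (α : ℝ) (hα : 0 < α)
    (hαdef : ((α : ℂ))⁻¹ ^ 2 = ((Hᴴ * (H * Hᴴ)⁻¹)ᴴ * (Hᴴ * (H * Hᴴ)⁻¹)).trace)
    (Q : Matrix (Fin N) (Fin N) ℂ) (hQ : Q.PosSemidef) :
    ((((α : ℂ) • (Hᴴ * (H * Hᴴ)⁻¹)) * Q * ((α : ℂ) • (Hᴴ * (H * Hᴴ)⁻¹))ᴴ).trace).re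
      ≤ (Q.trace).re := by
  set P := Hᴴ * (H * Hᴴ)⁻¹
  have hnorm : (Pᴴ * P).trace.re = (α ^ 2)⁻¹ := by
    rw [← hαdef, ← Complex.ofReal_inv, ← Complex.ofReal_pow, Complex.ofReal_re, inv_pow]
  have hscale : ((α : ℂ) • P) * Q * ((α : ℂ) • P)ᴴ = (α : ℂ) ^ 2 • (P * Q * Pᴴ) := by
    rw [conjTranspose_smul, Complex.star_def, Complex.conj_ofReal, smul_mul, Matrix.mul_smul,
      smul_mul, smul_smul, sq]
  calc ((((α : ℂ) • P) * Q * ((α : ℂ) • P)ᴴ).trace).re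
      = α ^ 2 * (P * Q * Pᴴ).trace.re := by
        rw [hscale, trace_smul, smul_eq_mul, ← Complex.ofReal_pow, Complex.re_ofReal_mul]
    _ ≤ α ^ 2 * ((Pᴴ * P).trace.re * Q.trace.re) := by
        gcongr
        exact re_trace_mul_mul_conjTranspose_le P hQ
    _ = Q.trace.re := by
        rw [hnorm]
        field_simp

/-- Pre-coding with the normalized right pseudo-inverse `Hᴿ = α H†` does not increase
the transmit power: for every positive semidefinite Hermitian `N × N` matrix `Q`,
`tr(Hᴿ Q (Hᴿ)ᴴ) ≤ tr(Q)` (an inequality of real parts of the traces). -/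
theorem normalized_right_pseudoinverse_power (N M : ℕ) (hN : 0 < N) (hM : 0 < M)
    (H : Matrix (Fin N) (Fin M) ℂ) (hinv : IsUnit (H * Hᴴ))
    (α : ℝ) (hα : 0 < α)
    (hαdef : ((α : ℂ))⁻¹ ^ 2 = ((Hᴴ * (H * Hᴴ)⁻¹)ᴴ * (Hᴴ * (H * Hᴴ)⁻¹)).trace)
    (Q : Matrix (Fin N) (Fin N) ℂ) (hQ : Q.PosSemidef) :
    ((((α : ℂ) • (Hᴴ * (H * Hᴴ)⁻¹)) * Q * ((α : ℂ) • (Hᴴ * (H * Hᴴ)⁻¹))ᴴ).trace).re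
      ≤ (Q.trace).re :=
  normalized_right_pseudoinverse_power_general N M H α hα hαdef Q hQ
end

section
/- (Sum-DoF outer bound) Let K ≥ 2 be an integer and N ≥ 0 a real number. If d lies in the DoF region 𝒟_K, then the total sum satisfies Σ_{j≠k} d(j,k) ≤ 2N. -/
/-- The DoF region `𝒟_K`: nonnegative families `d` (indexed by ordered pairs of
distinct indices in `{1,…,K}`) such that for every permutation `p` of `{1,…,K}`,
`Σ_{1≤j<k≤K} d(p_j, p_k) ≤ N`. -/
def DoFRegion (K : ℕ) (N : ℝ) : Set (Fin K → Fin K → ℝ) :=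
  {d | (∀ j k : Fin K, j ≠ k → 0 ≤ d j k) ∧
    ∀ p : Equiv.Perm (Fin K),
      ∑ j : Fin K, ∑ k ∈ Finset.univ.filter (fun k => j < k), d (p j) (p k) ≤ N}

/-!
Order the indices increasingly and then decreasingly: the two permutation constraints bound the
sums of `d` above and below the diagonal by `N` each, and together these cover every ordered pair.
-/

open Finset

section TriangularSums

variable {α M : Type*} [Fintype α] [LinearOrder α] [AddCommMonoid M]

theorem sum_filter_ne_eq_sum_filter_lt_add_sum_filter_gt (f : α → α → M) :
    ∑ j, ∑ k ∈ univ.filter (fun k => k ≠ j), f j k =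
      ∑ j, ∑ k ∈ univ.filter (fun k => j < k), f j k +
        ∑ j, ∑ k ∈ univ.filter (fun k => k < j), f j k := by
  rw [← sum_add_distrib]
  refine sum_congr rfl fun j _ => ?_
  have hsplit : univ.filter (fun k => k ≠ j) =
      univ.filter (fun k => j < k) ∪ univ.filter (fun k => k < j) := by
    ext k
    simp only [mem_filter, mem_union, mem_univ, true_and]
    exact ⟨fun h => h.lt_or_gt.symm, fun h => h.elim ne_of_gt ne_of_lt⟩
  rw [hsplit, sum_union (disjoint_filter.2 fun _ _ h₁ h₂ => lt_asymm h₁ h₂)]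

theorem sum_filter_lt_comp_eq_sum_filter_gt (e : α ≃ α) (he : ∀ a b, e a < e b ↔ b < a)
    (f : α → α → M) :
    ∑ j, ∑ k ∈ univ.filter (fun k => j < k), f (e j) (e k) =
      ∑ j, ∑ k ∈ univ.filter (fun k => k < j), f j k := by
  rw [← e.sum_comp (fun j => ∑ k ∈ univ.filter (fun k => k < j), f j k)]
  exact sum_congr rfl fun j _ => sum_equiv e (by simp [he]) (fun _ _ => rfl)

end TriangularSums

theorem sum_dof_outer_bound_general (K : ℕ) (N : ℝ)
    (d : Fin K → Fin K → ℝ) (hd : d ∈ DoFRegion K N) :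
    ∑ j : Fin K, ∑ k ∈ Finset.univ.filter (fun k => k ≠ j), d j k ≤ 2 * N := by
  obtain ⟨-, hperm⟩ := hd
  rw [sum_filter_ne_eq_sum_filter_lt_add_sum_filter_gt, two_mul,
    ← sum_filter_lt_comp_eq_sum_filter_gt Fin.revPerm (fun _ _ => Fin.rev_lt_rev)]
  exact add_le_add (by simpa using hperm 1) (hperm Fin.revPerm)

/-- Sum-DoF outer bound: every point `d` of the DoF region `𝒟_K` satisfies
`Σ_{j≠k} d(j,k) ≤ 2N`. -/
theorem sum_dof_outer_bound (K : ℕ) (hK : 2 ≤ K) (N : ℝ) (hN : 0 ≤ N)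
    (d : Fin K → Fin K → ℝ) (hd : d ∈ DoFRegion K N) :
    ∑ j : Fin K, ∑ k ∈ Finset.univ.filter (fun k => k ≠ j), d j k ≤ 2 * N :=
  sum_dof_outer_bound_general K N d hd
end

section
/- (Sum-DoF is exactly 2N) Let K ≥ 2 be an integer and N ≥ 0 a real number. The symmetric point d* defined by d*(j,k) = 2N/(K(K−1)) for all ordered pairs (j,k) of distinct indices lies in the DoF region 𝒟_K, and its total sum is Σ_{j≠k} d*(j,k) = 2N. Consequently, the maximum of Σ_{j≠k} d(j,k) over d ∈ 𝒟_K equals 2N. -/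
open Finset

theorem sum_sum_ne_const {ι R : Type*} [Fintype ι] [DecidableEq ι] [CommRing R] (c : R) :
    ∑ j : ι, ∑ _k ∈ univ.filter (fun k => k ≠ j), c =
      Fintype.card ι * (Fintype.card ι - 1) * c := by
  simp only [filter_ne', sum_const, card_erase_of_mem (mem_univ _), card_univ, nsmul_eq_mul]
  obtain h0 | hpos := (Fintype.card ι).eq_zero_or_pos
  · simp [h0]
  · rw [Nat.cast_sub hpos]
    push_cast
    ring

section LinearOrder

variable {ι M : Type*} [Fintype ι] [LinearOrder ι] [AddCommMonoid M]

theorem sum_sum_gt_eq_sum_sum_lt_swap (f : ι → ι → M) :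
    ∑ j, ∑ k ∈ univ.filter (fun k => k < j), f j k =
      ∑ j, ∑ k ∈ univ.filter (fun k => j < k), f k j :=
  sum_comm' fun _ _ => by simp

theorem sum_sum_ne_eq_sum_sum_lt_add_swap (f : ι → ι → M) :
    ∑ j, ∑ k ∈ univ.filter (fun k => k ≠ j), f j k =
      ∑ j, ∑ k ∈ univ.filter (fun k => j < k), f j k +
        ∑ j, ∑ k ∈ univ.filter (fun k => j < k), f k j := by
  rw [← sum_sum_gt_eq_sum_sum_lt_swap f, ← sum_add_distrib]
  refine sum_congr rfl fun j _ => ?_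
  simp only [sum_filter, ← sum_add_distrib]
  refine sum_congr rfl fun k _ => ?_
  rcases lt_trichotomy j k with h | rfl | h
  · simp [h, h.ne', h.not_gt]
  · simp
  · simp [h, h.ne, h.not_gt]

theorem sum_sum_lt_comp_strictAnti (e : Equiv.Perm ι) (he : StrictAnti e) (f : ι → ι → M) :
    ∑ j, ∑ k ∈ univ.filter (fun k => j < k), f (e j) (e k) =
      ∑ j, ∑ k ∈ univ.filter (fun k => j < k), f k j := by
  rw [← sum_sum_gt_eq_sum_sum_lt_swap f,
    ← Equiv.sum_comp e fun a => ∑ b ∈ univ.filter (fun b => b < a), f a b]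
  exact sum_congr rfl fun j _ => sum_equiv e (fun k => by simp [he.lt_iff_gt]) fun _ _ => rfl

end LinearOrder

theorem two_mul_sum_sum_lt_const {ι R : Type*} [Fintype ι] [LinearOrder ι] [CommRing R]
    (c : R) :
    2 * ∑ j : ι, ∑ _k ∈ univ.filter (fun k => j < k), c =
      Fintype.card ι * (Fintype.card ι - 1) * c := by
  rw [two_mul, ← sum_sum_ne_eq_sum_sum_lt_add_swap (fun (_ _ : ι) => c), sum_sum_ne_const]

theorem const_mem_DoFRegion {K : ℕ} {N c : ℝ} (hc : 0 ≤ c) (hcN : K * (K - 1) * c ≤ 2 * N) :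
    (fun _ _ : Fin K => c) ∈ DoFRegion K N := by
  refine ⟨fun _ _ _ => hc, fun _ => ?_⟩
  have h := two_mul_sum_sum_lt_const (ι := Fin K) c
  rw [Fintype.card_fin] at h
  linarith

theorem sum_sum_ne_le_of_mem_DoFRegion {K : ℕ} {N : ℝ} {d : Fin K → Fin K → ℝ}
    (hd : d ∈ DoFRegion K N) :
    ∑ j, ∑ k ∈ univ.filter (fun k => k ≠ j), d j k ≤ 2 * N := by
  have hid := hd.2 1
  have hrev := hd.2 Fin.revPerm
  simp only [Equiv.Perm.one_apply] at hid
  rw [sum_sum_lt_comp_strictAnti _ Fin.rev_strictAnti] at hrev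
  rw [sum_sum_ne_eq_sum_sum_lt_add_swap]
  linarith

/-- Sum-DoF is exactly `2N`: the symmetric point `d* ≡ 2N/(K(K−1))` lies in `𝒟_K`,
its total sum is `2N`, and `2N` is the maximum of the total sum over `𝒟_K`. -/
theorem sum_dof_exactly_two_N (K : ℕ) (hK : 2 ≤ K) (N : ℝ) (hN : 0 ≤ N) :
    (fun _ _ : Fin K => 2 * N / ((K : ℝ) * ((K : ℝ) - 1))) ∈ DoFRegion K N ∧
    (∑ j : Fin K, ∑ k ∈ Finset.univ.filter (fun k => k ≠ j),
      2 * N / ((K : ℝ) * ((K : ℝ) - 1))) = 2 * N ∧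
    IsGreatest
      ((fun d : Fin K → Fin K → ℝ =>
          ∑ j : Fin K, ∑ k ∈ Finset.univ.filter (fun k => k ≠ j), d j k) ''
        DoFRegion K N)
      (2 * N) := by
  have hKpos : (0 : ℝ) < K * (K - 1) := by
    have : (2 : ℝ) ≤ K := by exact_mod_cast hK
    nlinarith
  have htotal : ∑ j : Fin K, ∑ _k ∈ univ.filter (fun k => k ≠ j),
      2 * N / ((K : ℝ) * ((K : ℝ) - 1)) = 2 * N := by
    rw [sum_sum_ne_const, Fintype.card_fin, mul_div_cancel₀ _ hKpos.ne']
  have hmem : (fun _ _ : Fin K => 2 * N / ((K : ℝ) * ((K : ℝ) - 1))) ∈ DoFRegion K N :=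
    const_mem_DoFRegion (by positivity) (by rw [mul_div_cancel₀ _ hKpos.ne'])
  refine ⟨hmem, htotal, ⟨_, hmem, htotal⟩, ?_⟩
  rintro _ ⟨d, hd, rfl⟩
  exact sum_sum_ne_le_of_mem_DoFRegion hd
end

section
/- (Rational extreme points of rational polyhedra) Let m and n be positive integers, let A be an m×n matrix with rational entries, and let b ∈ ℚ^m. Consider the polyhedron S = {x ∈ ℝⁿ : Σ_{j=1}^n A_{ij} x_j ≤ b_i for all i = 1,…,m}. Then every extreme point of S has all coordinates rational, i.e., if x is an extreme point of S then x_j ∈ ℚ for all j. -/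
/-!
At an extreme point `x` of `{y | A y ≤ b}`, any direction `v` annihilated by the tight rows of
`A` can be added to and subtracted from `x` in small amounts without leaving the polyhedron, so
`v = 0`. Hence the rational matrix of tight rows is injective, has a rational left inverse `B`,
and `x = B b` is rational.
-/

open Filter Topology Matrix

theorem eq_zero_of_mem_extremePoints_of_add_mem_of_sub_mem {𝕜 E : Type*} [Field 𝕜]
    [LinearOrder 𝕜] [IsStrictOrderedRing 𝕜] [AddCommGroup E] [Module 𝕜 E] {A : Set E}
    {x v : E} (hx : x ∈ A.extremePoints 𝕜) (hadd : x + v ∈ A) (hsub : x - v ∈ A) : v = 0 := by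
  have hmid : x ∈ openSegment 𝕜 (x + v) (x - v) :=
    ⟨1 / 2, 1 / 2, by norm_num, by norm_num, by norm_num, by module⟩
  simpa using hx.2 hadd hsub hmid

theorem eq_zero_of_mem_extremePoints_of_tight_eq_zero {ι E : Type*} [Finite ι]
    [AddCommGroup E] [Module ℝ E] (f : ι → E →ₗ[ℝ] ℝ) (b : ι → ℝ) {x v : E}
    (hx : x ∈ {y | ∀ i, f i y ≤ b i}.extremePoints ℝ) (hv : ∀ i, f i x = b i → f i v = 0) :
    v = 0 := by
  have hnear : ∀ᶠ t in 𝓝 (0 : ℝ), x + t • v ∈ {y | ∀ i, f i y ≤ b i} := by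
    refine eventually_all.2 fun i => ?_
    by_cases htight : f i x = b i
    · exact .of_forall fun t => by simp [htight, hv i htight]
    · have hcont : Continuous fun t : ℝ => f i (x + t • v) := by
        simp only [map_add, map_smul, smul_eq_mul]
        fun_prop
      have hlt : f i (x + (0 : ℝ) • v) < b i := by simpa using (hx.1 i).lt_of_ne htight
      exact (hcont.continuousAt.eventually_lt continuousAt_const hlt).mono fun _ => le_of_lt
  have hnear_neg := (continuous_neg.tendsto' (0 : ℝ) 0 neg_zero).eventually hnear
  obtain ⟨t, ⟨hadd, hsub⟩, ht⟩ :=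
    (((hnear.and hnear_neg).filter_mono nhdsWithin_le_nhds).and self_mem_nhdsWithin).exists
      (f := 𝓝[≠] (0 : ℝ))
  rw [neg_smul, ← sub_eq_add_neg] at hsub
  have htv : t • v = 0 := eq_zero_of_mem_extremePoints_of_add_mem_of_sub_mem hx hadd hsub
  exact (smul_eq_zero.1 htv).resolve_left ht

theorem Matrix.exists_mul_eq_one_of_injective_mulVec {K m n : Type*} [Field K] [Fintype m]
    [Fintype n] [DecidableEq n] {M : Matrix m n K} (hM : Function.Injective M.mulVec) :
    ∃ B : Matrix n m K, B * M = 1 := by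
  classical
  obtain ⟨g, hg⟩ := (toLin' M).exists_leftInverse_of_injective (LinearMap.ker_eq_bot.2 hM)
  refine ⟨LinearMap.toMatrix' g, ?_⟩
  rw [← LinearMap.toMatrix'_toLin' M, ← LinearMap.toMatrix'_comp]
  simpa using congrArg LinearMap.toMatrix' hg

theorem Matrix.exists_comp_eq_of_mulVec_map_eq {K L m n : Type*} [Field K] [CommRing L]
    [Fintype m] [Fintype n] (φ : K →+* L) {M : Matrix m n K} (hM : Function.Injective M.mulVec)
    {x : n → L} {c : m → K} (hx : M.map φ *ᵥ x = φ ∘ c) : ∃ y : n → K, φ ∘ y = x := by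
  classical
  obtain ⟨B, hBM⟩ := exists_mul_eq_one_of_injective_mulVec hM
  refine ⟨B *ᵥ c, ?_⟩
  calc φ ∘ (B *ᵥ c) = B.map φ *ᵥ (M.map φ *ᵥ x) := by
        rw [hx]; ext i; exact RingHom.map_mulVec φ B c i
    _ = x := by
        rw [mulVec_mulVec, ← Matrix.map_mul, hBM, Matrix.map_one _ φ.map_zero φ.map_one,
          one_mulVec]

theorem extreme_points_rational_polyhedron_general (m n : ℕ)
    (A : Matrix (Fin m) (Fin n) ℚ) (b : Fin m → ℚ)
    (x : Fin n → ℝ)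
    (hx : x ∈ Set.extremePoints ℝ
      {y : Fin n → ℝ | ∀ i : Fin m, ∑ j : Fin n, (A i j : ℝ) * y j ≤ (b i : ℝ)}) :
    ∀ j : Fin n, ∃ q : ℚ, x j = (q : ℝ) := by
  let φ := Rat.castHom ℝ
  let tightRows : Matrix {i // ∑ j, (A i j : ℝ) * x j = b i} (Fin n) ℚ :=
    A.submatrix Subtype.val id
  have htight_injective : Function.Injective tightRows.mulVec := by
    refine (injective_iff_map_eq_zero tightRows.mulVecLin).2 fun q hq => ?_
    have hq_cast : φ ∘ q = 0 := by
      refine eq_zero_of_mem_extremePoints_of_tight_eq_zero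
        (fun i => LinearMap.proj i ∘ₗ (A.map φ).mulVecLin) (fun i => b i) hx fun i hi => ?_
      simpa [tightRows, Matrix.mulVec, dotProduct] using congrArg φ (congrFun hq ⟨i, hi⟩)
    exact funext fun j => by simpa [φ] using congrFun hq_cast j
  obtain ⟨y, rfl⟩ :=
    exists_comp_eq_of_mulVec_map_eq φ htight_injective (c := fun i => b i) (funext fun i => i.2)
  exact fun j => ⟨y j, rfl⟩

/-- Rational extreme points of rational polyhedra: every extreme point of the solution
set of a finite system of linear inequalities with rational coefficients has rational
coordinates. -/
theorem extreme_points_rational_polyhedron (m n : ℕ) (hm : 0 < m) (hn : 0 < n)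
    (A : Matrix (Fin m) (Fin n) ℚ) (b : Fin m → ℚ)
    (x : Fin n → ℝ)
    (hx : x ∈ Set.extremePoints ℝ
      {y : Fin n → ℝ | ∀ i : Fin m, ∑ j : Fin n, (A i j : ℝ) * y j ≤ (b i : ℝ)}) :
    ∀ j : Fin n, ∃ q : ℚ, x j = (q : ℝ) :=
  extreme_points_rational_polyhedron_general m n A b x hx
end
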